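/- For every dimension d ≥ 1 there exists a constant C > 0 (depending only on d) such that for every real ε with 0 < ε ≤ 1/2, every point q in Euclidean space ℝ^d, and every finite family of closed balls closedBall(c i, r i) (indexed by a finite type L, with r i > 0) each of which contains q, there exists a subset L' ⊆ L with |L'| ≤ C · ε^{-d} · log(1/ε) such that for every i ∈ L there exists m ∈ L' with r m ≥ r i and closedBall(c i, r i) ⊆ closedBall(c m, (1+ε)·(r m)). -/

import Mathlib

/-!
Since every ball contains `q`, a ball of radius at most `ε R / 2`, where `R` is the largest
radius, lies in the `(1 + ε)`-expansion of a largest ball. Every other ball has a dyadic scale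
`t = R / 2 ^ k` with `t / 2 < r ≤ t`, and only `O(log (1 / ε))` scales occur; its centre lies
within `t` of `q`, hence in one of `O((√d / ε) ^ d)` cubes of side `ε t / (2 √d)` around `q`.
Two balls with the same scale and cube have centres at distance at most `ε t / 2 < ε r`, so
keeping a largest ball of each (scale, cube) class suffices.
-/

open Real Finset Metric

theorem Finset.exists_card_le_card_image_forall_exists_fiber_max {ι κ β : Type*} [DecidableEq κ]
    [LinearOrder β] (s : Finset ι) (f : ι → κ) (w : ι → β) :
    ∃ t : Finset ι, #t ≤ #(s.image f) ∧ ∀ i ∈ s, ∃ m ∈ t, f m = f i ∧ w i ≤ w m := by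
  classical
  have hfiber : ∀ p ∈ s.image f,
      ∃ m ∈ s.filter (f · = p), ∀ j ∈ s.filter (f · = p), w j ≤ w m := by
    intro p hp
    obtain ⟨i, hi, rfl⟩ := mem_image.1 hp
    exact exists_max_image _ w ⟨i, mem_filter.2 ⟨hi, rfl⟩⟩
  choose g hg_mem hg_max using hfiber
  refine ⟨(s.image f).attach.image fun p => g p.1 p.2, card_image_le.trans card_attach.le, ?_⟩
  intro i hi
  have hp : f i ∈ s.image f := mem_image_of_mem f hi
  exact ⟨g (f i) hp, mem_image.2 ⟨⟨f i, hp⟩, mem_attach _ _, rfl⟩,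
    (mem_filter.1 (hg_mem _ hp)).2, hg_max _ hp i (mem_filter.2 ⟨hi, rfl⟩)⟩

theorem closedBall_subset_closedBall_of_two_mul_le {X : Type*} [PseudoMetricSpace X] {q x y : X}
    {a b ε : ℝ} (hqx : q ∈ closedBall x a) (hqy : q ∈ closedBall y b) (hab : 2 * a ≤ ε * b) :
    closedBall x a ⊆ closedBall y ((1 + ε) * b) := by
  refine closedBall_subset_closedBall' ?_
  rw [mem_closedBall, dist_comm] at hqx
  rw [mem_closedBall] at hqy
  linarith [dist_triangle x q y]

namespace EuclideanSpace

variable {ι : Type*} [Fintype ι]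

theorem dist_le_sqrt_card_mul {x y : EuclideanSpace ℝ ι} {s : ℝ} (hs : 0 ≤ s)
    (h : ∀ j, dist (x j) (y j) ≤ s) : dist x y ≤ √(Fintype.card ι) * s := by
  rw [EuclideanSpace.dist_eq, ← sqrt_sq hs, ← sqrt_mul (Nat.cast_nonneg _)]
  gcongr
  calc ∑ j, dist (x j) (y j) ^ 2 ≤ ∑ _j : ι, s ^ 2 := by gcongr with j; exact h j
    _ = Fintype.card ι * s ^ 2 := by simp

noncomputable def gridCell (h : ℝ) (x : EuclideanSpace ℝ ι) : ι → ℤ := fun j => ⌊x j / h⌋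

theorem dist_le_of_gridCell_eq {h : ℝ} (hh : 0 < h) {x y : EuclideanSpace ℝ ι}
    (hxy : gridCell h x = gridCell h y) : dist x y ≤ √(Fintype.card ι) * h := by
  refine dist_le_sqrt_card_mul hh.le fun j => ?_
  have := Int.abs_sub_lt_one_of_floor_eq_floor (congrFun hxy j)
  rw [← sub_div, abs_div, abs_of_pos hh, div_lt_one hh] at this
  exact (Real.dist_eq _ _).trans_le this.le

theorem abs_gridCell_le {h t : ℝ} (hh : 0 < h) {x : EuclideanSpace ℝ ι} (hx : ‖x‖ ≤ t) (j : ι) :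
    |gridCell h x j| ≤ ⌈t / h⌉₊ := by
  have hxj : |x j / h| ≤ t / h := by
    rw [abs_div, abs_of_pos hh, ← Real.norm_eq_abs]
    gcongr
    exact (PiLp.norm_apply_le x j).trans hx
  have hM : t / h ≤ ⌈t / h⌉₊ := Nat.le_ceil _
  rw [abs_le] at hxj ⊢
  constructor
  · exact Int.le_floor.2 (by push_cast; linarith)
  · exact Int.floor_le_iff.2 (by push_cast; linarith)

end EuclideanSpace

open EuclideanSpace

noncomputable def dyadicScale (R a : ℝ) : ℤ := Int.log 2 (R / a)

section DyadicScale

variable {R a : ℝ}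

theorem le_div_two_zpow_dyadicScale (ha : 0 < a) (hR : 0 < R) :
    a ≤ R / 2 ^ dyadicScale R a := by
  have := Int.zpow_log_le_self (b := 2) one_lt_two (div_pos hR ha)
  push_cast at this
  rw [le_div_iff₀ (by positivity), mul_comm, ← le_div_iff₀ ha]
  exact this

theorem div_two_zpow_dyadicScale_lt (ha : 0 < a) :
    R / 2 ^ dyadicScale R a < 2 * a := by
  have := Int.lt_zpow_succ_log_self (b := 2) one_lt_two (R / a)
  push_cast at this
  rw [zpow_add_one₀ two_ne_zero, div_lt_iff₀ ha] at this
  rw [div_lt_iff₀ (by positivity)]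
  unfold dyadicScale
  linarith

theorem dyadicScale_mem_Icc {ε : ℝ} (hε : 0 < ε) (ha : 0 < a) (haR : a ≤ R)
    (hlarge : ε * R / 2 < a) : dyadicScale R a ∈ Icc 0 (Int.log 2 (2 / ε)) := by
  rw [mem_Icc, dyadicScale]
  constructor
  · rw [← Int.log_one_right (R := ℝ) 2]
    exact Int.log_mono_right one_pos ((one_le_div ha).2 haR)
  · refine Int.log_mono_right (div_pos (ha.trans_le haR) ha) ?_
    rw [div_le_div_iff₀ ha hε]
    linarith

end DyadicScale

noncomputable def ballKey {d : ℕ} (ε R : ℝ) (q x : EuclideanSpace ℝ (Fin d)) (a : ℝ) :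
    ℤ × (Fin d → ℤ) :=
  (dyadicScale R a, gridCell (ε * (R / 2 ^ dyadicScale R a) / (2 * √d)) (x - q))

section BallKey

variable {d : ℕ} {ε R a b : ℝ} {q x y : EuclideanSpace ℝ (Fin d)}

theorem closedBall_subset_of_ballKey_eq (hd : 0 < d) (hε : 0 < ε) (hR : 0 < R) (hb : 0 < b)
    (hab : a ≤ b) (hkey : ballKey ε R q x a = ballKey ε R q y b) :
    closedBall x a ⊆ closedBall y ((1 + ε) * b) := by
  obtain ⟨hscale, hcell⟩ := Prod.ext_iff.1 hkey
  simp only [ballKey] at hscale hcell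
  rw [hscale] at hcell
  set t := R / 2 ^ dyadicScale R b
  have hsd : 0 < √(d : ℝ) := sqrt_pos.2 (Nat.cast_pos.2 hd)
  have hdist : dist x y ≤ ε * t / 2 := by
    have := dist_le_of_gridCell_eq (by positivity) hcell
    rw [dist_sub_right, Fintype.card_fin] at this
    exact this.trans_eq (by field_simp)
  have ht : t < 2 * b := div_two_zpow_dyadicScale_lt hb
  refine closedBall_subset_closedBall' ?_
  linarith [mul_lt_mul_of_pos_left ht hε]

theorem ballKey_mem (hd : 0 < d) (hε : 0 < ε) (ha : 0 < a) (haR : a ≤ R)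
    (hlarge : ε * R / 2 < a) (hq : q ∈ closedBall x a) :
    ballKey ε R q x a ∈ Icc 0 (Int.log 2 (2 / ε)) ×ˢ
      Icc (fun _ => -(⌈2 * √(d : ℝ) / ε⌉₊ : ℤ)) (fun _ => (⌈2 * √(d : ℝ) / ε⌉₊ : ℤ)) := by
  have hR : 0 < R := ha.trans_le haR
  have hsd : 0 < √(d : ℝ) := sqrt_pos.2 (Nat.cast_pos.2 hd)
  set t := R / 2 ^ dyadicScale R a
  have hx : ‖x - q‖ ≤ t := by
    rw [← dist_eq_norm, dist_comm]
    exact (mem_closedBall.1 hq).trans (le_div_two_zpow_dyadicScale ha hR)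
  have ht : 0 < t := by positivity
  have hcell := abs_gridCell_le (h := ε * t / (2 * √d)) (by positivity) hx
  have htM : t / (ε * t / (2 * √d)) = 2 * √d / ε := by field_simp
  rw [htM] at hcell
  exact mem_product.2 ⟨dyadicScale_mem_Icc hε ha haR hlarge,
    mem_Icc.2 ⟨fun j => (abs_le.1 (hcell j)).1, fun j => (abs_le.1 (hcell j)).2⟩⟩

end BallKey

noncomputable def numScales (ε : ℝ) : ℕ := (Int.log 2 (2 / ε) + 1).toNat

noncomputable def numCellsPerAxis (d : ℕ) (ε : ℝ) : ℕ := 2 * ⌈2 * √(d : ℝ) / ε⌉₊ + 1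

theorem exists_finset_cover_large_balls {d : ℕ} (hd : 0 < d) {ε R : ℝ} (hε : 0 < ε)
    {q : EuclideanSpace ℝ (Fin d)} {L : Type*} [Fintype L] (c : L → EuclideanSpace ℝ (Fin d))
    (r : L → ℝ) (hr : ∀ i, 0 < r i) (hrR : ∀ i, r i ≤ R)
    (hq : ∀ i, q ∈ closedBall (c i) (r i)) :
    ∃ T : Finset L, #T ≤ numScales ε * numCellsPerAxis d ε ^ d ∧
      ∀ i, ε * R / 2 < r i → ∃ m ∈ T, r i ≤ r m ∧
        closedBall (c i) (r i) ⊆ closedBall (c m) ((1 + ε) * r m) := by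
  classical
  set large := univ.filter fun i => ε * R / 2 < r i
  set key := fun i => ballKey ε R q (c i) (r i)
  obtain ⟨T, hT_card, hT⟩ := exists_card_le_card_image_forall_exists_fiber_max large key r
  refine ⟨T, hT_card.trans ?_, fun i hi => ?_⟩
  · calc #(large.image key)
        ≤ #(Icc 0 (Int.log 2 (2 / ε)) ×ˢ
            Icc (fun _ => -(⌈2 * √(d : ℝ) / ε⌉₊ : ℤ)) (fun _ => (⌈2 * √(d : ℝ) / ε⌉₊ : ℤ))) :=
          card_le_card <| image_subset_iff.2 fun i hi =>
            ballKey_mem hd hε (hr i) (hrR i) (mem_filter.1 hi).2 (hq i)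
      _ = numScales ε * numCellsPerAxis d ε ^ d := by
          simp only [card_product, Pi.card_Icc, Int.card_Icc, prod_const, card_univ,
            Fintype.card_fin, numScales, numCellsPerAxis, sub_zero]
          congr 2
          omega
  · obtain ⟨m, hm, hkey, hle⟩ := hT i (mem_filter.2 ⟨mem_univ i, hi⟩)
    exact ⟨m, hm, hle, closedBall_subset_of_ballKey_eq hd hε ((hr i).trans_le (hrR i)) (hr m) hle
      hkey.symm⟩

section Counting

variable {ε : ℝ}

theorem numScales_le (hε : 0 < ε) (hε2 : ε ≤ 1 / 2) : (numScales ε : ℝ) ≤ 5 * log (1 / ε) := by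
  have h2ε : 1 ≤ 2 / ε := by rw [le_div_iff₀ hε]; linarith
  have hn : 0 ≤ Int.log 2 (2 / ε) := by
    rw [← Int.log_one_right (R := ℝ) 2]
    exact Int.log_mono_right one_pos h2ε
  have hcast : (numScales ε : ℝ) = Int.log 2 (2 / ε) + 1 := by
    rw [numScales]; exact_mod_cast Int.toNat_of_nonneg (by omega)
  have hfloor : (Int.log 2 (2 / ε) : ℝ) ≤ logb 2 (2 / ε) := by
    have := Real.floor_logb_natCast (b := 2) (zero_le_one.trans h2ε)
    push_cast at this
    exact this ▸ Int.floor_le _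
  have hlog2 : 0 < log 2 := log_pos one_lt_two
  have hlogb : logb 2 (2 / ε) = 1 + log (1 / ε) / log 2 := by
    rw [logb, show 2 / ε = 2 * (1 / ε) by ring, log_mul two_ne_zero (by positivity)]
    field_simp
  have hℓ : log 2 ≤ log (1 / ε) := log_le_log two_pos (by rw [le_div_iff₀ hε]; linarith)
  have hu : 1 ≤ log (1 / ε) / log 2 := (one_le_div hlog2).2 hℓ
  have h3u : 3 * (log (1 / ε) / log 2) ≤ 5 * log (1 / ε) := by
    rw [mul_div_assoc', div_le_iff₀ hlog2]
    nlinarith [log_two_gt_d9]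
  linarith

theorem numCellsPerAxis_le {d : ℕ} (hd : 1 ≤ d) (hε : 0 < ε) (hε1 : ε ≤ 1) :
    (numCellsPerAxis d ε : ℝ) ≤ 7 * √(d : ℝ) / ε := by
  have hceil := Nat.ceil_lt_add_one (by positivity : 0 ≤ 2 * √(d : ℝ) / ε)
  have hsd : 1 ≤ √(d : ℝ) := one_le_sqrt.2 (by exact_mod_cast hd)
  have : 1 ≤ √(d : ℝ) / ε := (one_le_div hε).2 (by linarith)
  rw [numCellsPerAxis]
  push_cast
  simp only [mul_div_assoc] at hceil ⊢
  linarith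

theorem one_add_numScales_mul_le {d : ℕ} (hd : 1 ≤ d) (hε : 0 < ε) (hε2 : ε ≤ 1 / 2) :
    (1 + numScales ε * numCellsPerAxis d ε ^ d : ℝ) ≤
      10 * (7 * √(d : ℝ)) ^ d * ε ^ (-(d : ℤ)) * log (1 / ε) := by
  have hA := numScales_le hε hε2
  have hB : (numCellsPerAxis d ε : ℝ) ^ d ≤ (7 * √(d : ℝ)) ^ d * ε ^ (-(d : ℤ)) := by
    rw [zpow_neg, zpow_natCast, ← div_eq_mul_inv, ← div_pow]
    exact pow_le_pow_left₀ (Nat.cast_nonneg _) (numCellsPerAxis_le hd hε (by linarith)) d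
  have hB1 : 1 ≤ (7 * √(d : ℝ)) ^ d * ε ^ (-(d : ℤ)) := by
    rw [zpow_neg, zpow_natCast]
    have hsd : 1 ≤ √(d : ℝ) := one_le_sqrt.2 (by exact_mod_cast hd)
    exact one_le_mul_of_one_le_of_one_le (one_le_pow₀ (by linarith))
      ((one_le_inv₀ (by positivity)).2 (pow_le_one₀ hε.le (by linarith)))
  have hA1 : 1 ≤ 5 * log (1 / ε) := by
    have := log_le_log two_pos (show (2 : ℝ) ≤ 1 / ε by rw [le_div_iff₀ hε]; linarith)
    linarith [log_two_gt_d9]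
  calc (1 + numScales ε * numCellsPerAxis d ε ^ d : ℝ)
      ≤ 5 * log (1 / ε) * ((7 * √(d : ℝ)) ^ d * ε ^ (-(d : ℤ))) +
        5 * log (1 / ε) * ((7 * √(d : ℝ)) ^ d * ε ^ (-(d : ℤ))) := by
        gcongr
        exact one_le_mul_of_one_le_of_one_le hA1 hB1
    _ = _ := by ring

end Counting

/-- for every dimension `d ≥ 1` there is a constant `C > 0` (depending only on
`d`) such that for every `0 < ε ≤ 1/2`, every point `q` in `ℝ^d`, and every finite family of
closed balls each containing `q`, there is a subfamily of at most `C · ε⁻ᵈ · log(1/ε)` balls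
such that every ball of the family is contained in a `(1+ε)`-expansion of some ball of the
subfamily of at least its radius. -/
theorem euclidean_ball_family_selection (d : ℕ) (hd : 1 ≤ d) :
    ∃ C : ℝ, 0 < C ∧
      ∀ (ε : ℝ), 0 < ε → ε ≤ 1/2 →
      ∀ (q : EuclideanSpace ℝ (Fin d)),
      ∀ (L : Type) [Fintype L],
      ∀ (c : L → EuclideanSpace ℝ (Fin d)) (r : L → ℝ),
      (∀ i, 0 < r i) →
      (∀ i, q ∈ Metric.closedBall (c i) (r i)) →
      ∃ L' : Finset L,
        (L'.card : ℝ) ≤ C * ε ^ (-(d : ℤ)) * Real.log (1/ε) ∧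
        ∀ i : L, ∃ m ∈ L', r i ≤ r m ∧
          Metric.closedBall (c i) (r i) ⊆ Metric.closedBall (c m) ((1 + ε) * r m) := by
  classical
  refine ⟨10 * (7 * √(d : ℝ)) ^ d, by positivity, ?_⟩
  intro ε hε hε2 q L _ c r hr hq
  have hbound := one_add_numScales_mul_le hd hε hε2
  rcases isEmpty_or_nonempty L with _ | _
  · exact ⟨∅, by simpa using (by positivity : (0 : ℝ) ≤ 1 + _).trans hbound, isEmptyElim⟩
  obtain ⟨i₀, -, hi₀⟩ := exists_max_image univ r univ_nonempty
  obtain ⟨T, hT_card, hT⟩ :=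
    exists_finset_cover_large_balls hd hε c r hr (fun i => hi₀ i (mem_univ i)) hq
  refine ⟨insert i₀ T, le_trans ?_ hbound, fun i => ?_⟩
  · have := (card_insert_le i₀ T).trans (Nat.add_le_add_right hT_card 1)
    rw [add_comm]
    exact_mod_cast this
  · by_cases hi : ε * r i₀ / 2 < r i
    · obtain ⟨m, hm, hle, hsub⟩ := hT i hi
      exact ⟨m, mem_insert_of_mem hm, hle, hsub⟩
    · exact ⟨i₀, mem_insert_self _ _, hi₀ i (mem_univ i),
        closedBall_subset_closedBall_of_two_mul_le (hq i) (hq i₀) (by linarith)⟩
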